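/- arXiv:1103.5588 — 5 statements merged into one kernel-verified Lean document; each statement's English description precedes it below -/
import Mathlib

section
/- Let a < b be real numbers, V : [a,b] → ℝ continuous, and U a unitary 2×2 complex matrix. For a C¹ function Φ : [a,b] → ℂ define its boundary data φ = (Φ(a), Φ(b)) ∈ ℂ² and φ̇ = (−Φ'(a), Φ'(b)) ∈ ℂ², and for C¹ functions Ψ, Φ define Q(Ψ,Φ) = ∫ₐᵇ conj(Ψ'(x)) Φ'(x) dx − ( conj(Ψ(b))Φ'(b) − conj(Ψ(a))Φ'(a) ) + ∫ₐᵇ conj(Ψ(x)) V(x) Φ(x) dx. If both Ψ and Φ are C¹ on [a,b] and their boundary data satisfy ψ − iψ̇ = U(ψ + iψ̇) and φ − iφ̇ = U(φ + iφ̇), then Q(Ψ,Φ) = conj( Q(Φ,Ψ) ), i.e., the form Q is hermitian on functions satisfying the boundary condition. -/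
open scoped Matrix


lemma my_conj_interval (f : ℝ → ℂ) (a b : ℝ) :
    (∫ x in a..b, (starRingEnd ℂ) (f x)) = (starRingEnd ℂ) (∫ x in a..b, f x) := by
  simp only [intervalIntegral, map_sub, integral_conj]

lemma my_unitary_dot {n : Type*} [Fintype n] [DecidableEq n]
    (U : Matrix n n ℂ) (hU : U ∈ Matrix.unitaryGroup n ℂ) (x y : n → ℂ) :
    star (U.mulVec x) ⬝ᵥ (U.mulVec y) = star x ⬝ᵥ y := by
  rw [Matrix.star_mulVec, Matrix.dotProduct_mulVec, Matrix.vecMul_vecMul]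
  rw [show Uᴴ * U = 1 from hU.1, Matrix.vecMul_one]

lemma my_bc_dot {n : Type*} [Fintype n] [DecidableEq n]
    (U : Matrix n n ℂ) (hU : U ∈ Matrix.unitaryGroup n ℂ) (p p' q q' : n → ℂ)
    (hp : p - Complex.I • p' = U.mulVec (p + Complex.I • p'))
    (hq : q - Complex.I • q' = U.mulVec (q + Complex.I • q')) :
    star p ⬝ᵥ q' = star p' ⬝ᵥ q := by
  have h := my_unitary_dot U hU (p + Complex.I • p') (q + Complex.I • q')
  rw [← hp, ← hq] at h
  simp only [star_sub, star_add, star_smul, Complex.star_def, Complex.conj_I,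
    sub_dotProduct, dotProduct_sub, add_dotProduct,
    dotProduct_add, smul_dotProduct, dotProduct_smul,
    smul_eq_mul, neg_smul, neg_dotProduct, smul_smul] at h
  have h2 : (2 * Complex.I) * (star p ⬝ᵥ q') = (2 * Complex.I) * (star p' ⬝ᵥ q) := by
    ring_nf
    ring_nf at h
    linear_combination -h
  exact mul_left_cancel₀ (by simp [Complex.I_ne_zero]) h2

/-- For `C¹` functions `Ψ`, `Φ` on `[a,b]` whose boundary data
`ψ = (Ψ(a), Ψ(b))`, `ψ̇ = (-Ψ'(a), Ψ'(b))` (and similarly for `Φ`) satisfy the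
self-adjoint boundary condition `ψ - iψ̇ = U(ψ + iψ̇)` for a unitary 2×2 matrix `U`,
the quadratic form
`Q(Ψ,Φ) = ∫ₐᵇ conj(Ψ')Φ' - (conj(Ψ(b))Φ'(b) - conj(Ψ(a))Φ'(a)) + ∫ₐᵇ conj(Ψ)VΦ`
is hermitian: `Q(Ψ,Φ) = conj (Q(Φ,Ψ))`. -/
theorem stmt_5 (a b : ℝ) (hab : a < b) (V : ℝ → ℝ) (hV : ContinuousOn V (Set.Icc a b))
    (U : Matrix (Fin 2) (Fin 2) ℂ) (hU : U ∈ Matrix.unitaryGroup (Fin 2) ℂ)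
    (Ψ Φ Ψ' Φ' : ℝ → ℂ)
    (hΨ : ∀ x ∈ Set.Icc a b, HasDerivAt Ψ (Ψ' x) x)
    (hΨ'c : ContinuousOn Ψ' (Set.Icc a b))
    (hΦ : ∀ x ∈ Set.Icc a b, HasDerivAt Φ (Φ' x) x)
    (hΦ'c : ContinuousOn Φ' (Set.Icc a b))
    (hbcΨ : ![Ψ a, Ψ b] - Complex.I • ![-Ψ' a, Ψ' b] =
      U.mulVec (![Ψ a, Ψ b] + Complex.I • ![-Ψ' a, Ψ' b]))
    (hbcΦ : ![Φ a, Φ b] - Complex.I • ![-Φ' a, Φ' b] =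
      U.mulVec (![Φ a, Φ b] + Complex.I • ![-Φ' a, Φ' b])) :
    (∫ x in a..b, (starRingEnd ℂ) (Ψ' x) * Φ' x)
      - ((starRingEnd ℂ) (Ψ b) * Φ' b - (starRingEnd ℂ) (Ψ a) * Φ' a)
      + (∫ x in a..b, (starRingEnd ℂ) (Ψ x) * (V x : ℂ) * Φ x)
    = (starRingEnd ℂ) ((∫ x in a..b, (starRingEnd ℂ) (Φ' x) * Ψ' x)
        - ((starRingEnd ℂ) (Φ b) * Ψ' b - (starRingEnd ℂ) (Φ a) * Ψ' a)
        + (∫ x in a..b, (starRingEnd ℂ) (Φ x) * (V x : ℂ) * Ψ x)) := by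
  have hb := my_bc_dot U hU (![Ψ a, Ψ b]) (![-Ψ' a, Ψ' b]) (![Φ a, Φ b]) (![-Φ' a, Φ' b])
    hbcΨ hbcΦ
  simp only [dotProduct, Fin.sum_univ_two, Pi.star_apply, Complex.star_def,
    Matrix.cons_val_zero, Matrix.cons_val_one, Matrix.head_cons, map_neg] at hb
  have h1 : (starRingEnd ℂ) (∫ x in a..b, (starRingEnd ℂ) (Φ' x) * Ψ' x)
      = ∫ x in a..b, (starRingEnd ℂ) (Ψ' x) * Φ' x := by
    rw [← my_conj_interval]
    congr 1
    funext x
    rw [map_mul, Complex.conj_conj]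
    ring
  have h2 : (starRingEnd ℂ) (∫ x in a..b, (starRingEnd ℂ) (Φ x) * (V x : ℂ) * Ψ x)
      = ∫ x in a..b, (starRingEnd ℂ) (Ψ x) * (V x : ℂ) * Φ x := by
    rw [← my_conj_interval]
    congr 1
    funext x
    rw [map_mul, map_mul, Complex.conj_conj, Complex.conj_ofReal]
    ring
  rw [map_add, map_sub, h1, h2, map_sub, map_mul, map_mul, Complex.conj_conj,
    Complex.conj_conj]
  linear_combination -hb
end

section
/- Let a < b be real numbers, V : [a,b] → ℝ continuous, λ ∈ ℂ, and Φ : [a,b] → ℂ a C² function. Suppose that for every smooth function ψ : ℝ → ℂ with compact support contained in the open interval (a,b), ∫ₐᵇ conj(ψ'(x)) Φ'(x) dx + ∫ₐᵇ conj(ψ(x)) V(x) Φ(x) dx = λ ∫ₐᵇ conj(ψ(x)) Φ(x) dx. Then −Φ''(x) + V(x)Φ(x) = λΦ(x) for all x ∈ (a,b). -/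
/-!
Integrating the second-order term by parts against a test function `ψ`, which vanishes at the
end points, turns the weak formulation into `∫ conj ψ · (-Φ'' + VΦ - λΦ) = 0`. Real test
functions are among the admissible ones, so the fundamental lemma of the calculus of variations
makes the continuous residual `-Φ'' + VΦ - λΦ` vanish almost everywhere on `(a, b)`, hence
everywhere there.
-/

open MeasureTheory Set ComplexConjugate
open scoped ContDiff

theorem IsOpen.eqOn_zero_of_integral_contDiff_smul_eq_zero
    {E F : Type*} [NormedAddCommGroup E] [NormedSpace ℝ E] [FiniteDimensional ℝ E]
    [MeasurableSpace E] [BorelSpace E] [NormedAddCommGroup F] [NormedSpace ℝ F] [CompleteSpace F]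
    {μ : Measure E} [IsLocallyFiniteMeasure μ] [μ.IsOpenPosMeasure] {U : Set E} {f : E → F}
    (hU : IsOpen U) (hf : ContinuousOn f U)
    (h : ∀ g : E → ℝ, ContDiff ℝ ∞ g → HasCompactSupport g → tsupport g ⊆ U →
      ∫ x, g x • f x ∂μ = 0) :
    EqOn f 0 U := by
  have hae := hU.ae_eq_zero_of_integral_contDiff_smul_eq_zero
    (hf.locallyIntegrableOn hU.measurableSet) h
  exact Measure.eqOn_open_of_ae_eq ((ae_restrict_iff' hU.measurableSet).2 hae) hU hf
    continuousOn_const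

theorem apply_eq_zero_of_tsupport_subset_Ioo {M : Type*} [Zero M] {f : ℝ → M} {a b : ℝ}
    (hf : tsupport f ⊆ Ioo a b) : f a = 0 ∧ f b = 0 :=
  ⟨image_eq_zero_of_notMem_tsupport fun h => (hf h).1.false,
    image_eq_zero_of_notMem_tsupport fun h => (hf h).2.false⟩

theorem integral_ofReal_smul_eq_intervalIntegral_conj_mul {ψ : ℝ → ℝ} {a b : ℝ}
    (hψ : tsupport ψ ⊆ Ioo a b) (f : ℝ → ℂ) :
    ∫ x, ψ x • f x = ∫ x in a..b, conj (ψ x : ℂ) * f x := by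
  rw [intervalIntegral.integral_eq_integral_of_support_subset]
  · simp only [Complex.conj_ofReal, Complex.real_smul]
  · intro x hx
    have hψx : ψ x ≠ 0 := fun h0 => hx (by simp [h0])
    exact Ioo_subset_Ioc_self (hψ (subset_tsupport ψ hψx))

section IntervalIntegral

variable {a b : ℝ}

theorem integral_conj_mul_deriv_eq_neg {ψ v v' : ℝ → ℂ} (hψ : ContDiff ℝ 1 ψ)
    (ha : ψ a = 0) (hb : ψ b = 0) (hv : ∀ x ∈ uIcc a b, HasDerivAt v (v' x) x)
    (hv' : IntervalIntegrable v' volume a b) :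
    ∫ x in a..b, conj (ψ x) * v' x = -∫ x in a..b, conj (deriv ψ x) * v x := by
  have hψ' : ∀ x, HasDerivAt (fun x => conj (ψ x)) (conj (deriv ψ x)) x := fun x =>
    ((hψ.differentiable one_ne_zero x).hasDerivAt).star
  have hψ'c : Continuous fun x => conj (deriv ψ x) :=
    continuous_star.comp (hψ.continuous_deriv le_rfl)
  rw [intervalIntegral.integral_mul_deriv_eq_deriv_mul (fun x _ => hψ' x) hv
    (hψ'c.intervalIntegrable a b) hv', ha, hb]
  simp

theorem integral_conj_mul_eigen_residual {ψ : ℝ → ℂ} (hψ : ContDiff ℝ 1 ψ)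
    (ha : ψ a = 0) (hb : ψ b = 0) {V Φ Φ' Φ'' : ℝ → ℂ} (hV : ContinuousOn V (uIcc a b))
    (hΦ : ∀ x ∈ uIcc a b, HasDerivAt Φ (Φ' x) x)
    (hΦ' : ∀ x ∈ uIcc a b, HasDerivAt Φ' (Φ'' x) x) (hΦ'' : ContinuousOn Φ'' (uIcc a b))
    (lam : ℂ) :
    ∫ x in a..b, conj (ψ x) * (-Φ'' x + V x * Φ x - lam * Φ x)
      = (∫ x in a..b, conj (deriv ψ x) * Φ' x) + (∫ x in a..b, conj (ψ x) * V x * Φ x)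
        - lam * ∫ x in a..b, conj (ψ x) * Φ x := by
  have hψc : ContinuousOn (fun x => conj (ψ x)) (uIcc a b) :=
    (continuous_star.comp hψ.continuous).continuousOn
  have hΦc : ContinuousOn Φ (uIcc a b) := fun x hx =>
    (hΦ x hx).continuousAt.continuousWithinAt
  have h₁ : IntervalIntegrable (fun x => -(conj (ψ x) * Φ'' x)) volume a b :=
    (hψc.mul hΦ'').intervalIntegrable.neg
  have h₂ : IntervalIntegrable (fun x => conj (ψ x) * V x * Φ x) volume a b :=
    ((hψc.mul hV).mul hΦc).intervalIntegrable
  have h₃ : IntervalIntegrable (fun x => lam * (conj (ψ x) * Φ x)) volume a b :=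
    (hψc.mul hΦc).intervalIntegrable.const_mul lam
  have hexpand : ∀ x, conj (ψ x) * (-Φ'' x + V x * Φ x - lam * Φ x)
      = -(conj (ψ x) * Φ'' x) + conj (ψ x) * V x * Φ x - lam * (conj (ψ x) * Φ x) := by
    intro x; ring
  simp_rw [hexpand]
  rw [intervalIntegral.integral_sub (h₁.add h₂) h₃, intervalIntegral.integral_add h₁ h₂,
    intervalIntegral.integral_neg, intervalIntegral.integral_const_mul,
    integral_conj_mul_deriv_eq_neg hψ ha hb hΦ' hΦ''.intervalIntegrable, neg_neg]

end IntervalIntegral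

theorem stmt_7_general (a b : ℝ) (V : ℝ → ℝ) (hV : ContinuousOn V (Set.Icc a b))
    (lam : ℂ) (Φ Φ' Φ'' : ℝ → ℂ)
    (hΦ : ∀ x ∈ Set.Icc a b, HasDerivAt Φ (Φ' x) x)
    (hΦ' : ∀ x ∈ Set.Icc a b, HasDerivAt Φ' (Φ'' x) x)
    (hΦ''c : ContinuousOn Φ'' (Set.Icc a b))
    (hweak : ∀ ψ : ℝ → ℂ, ContDiff ℝ (⊤ : ℕ∞) ψ → tsupport ψ ⊆ Set.Ioo a b →
      (∫ x in a..b, (starRingEnd ℂ) (deriv ψ x) * Φ' x)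
        + (∫ x in a..b, (starRingEnd ℂ) (ψ x) * (V x : ℂ) * Φ x)
      = lam * ∫ x in a..b, (starRingEnd ℂ) (ψ x) * Φ x) :
    ∀ x ∈ Set.Ioo a b, -Φ'' x + (V x : ℂ) * Φ x = lam * Φ x := by
  intro x hx
  rw [← uIcc_of_le (hx.1.trans hx.2).le] at hV hΦ hΦ' hΦ''c
  have hVc : ContinuousOn (fun x => (V x : ℂ)) (uIcc a b) :=
    Complex.continuous_ofReal.comp_continuousOn hV
  have hΦc : ContinuousOn Φ (uIcc a b) := fun x hx =>
    (hΦ x hx).continuousAt.continuousWithinAt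
  have hIoo : Ioo a b ⊆ uIcc a b := Ioo_subset_Icc_self.trans Icc_subset_uIcc
  rw [← sub_eq_zero]
  refine isOpen_Ioo.eqOn_zero_of_integral_contDiff_smul_eq_zero (μ := volume)
    (f := fun x => -Φ'' x + (V x : ℂ) * Φ x - lam * Φ x)
    (((hΦ''c.neg.add (hVc.mul hΦc)).sub (continuousOn_const.mul hΦc)).mono hIoo)
    (fun ψ hψ _ hsupp => ?_) hx
  have hψ' : ContDiff ℝ (⊤ : ℕ∞) fun x => (ψ x : ℂ) :=
    Complex.ofRealCLM.contDiff.comp hψ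
  have hsupp' : tsupport (fun x => (ψ x : ℂ)) ⊆ Ioo a b :=
    (tsupport_comp_subset Complex.ofReal_zero ψ).trans hsupp
  obtain ⟨ha, hb⟩ := apply_eq_zero_of_tsupport_subset_Ioo hsupp'
  rw [integral_ofReal_smul_eq_intervalIntegral_conj_mul hsupp,
    integral_conj_mul_eigen_residual (hψ'.of_le (mod_cast le_top)) ha hb hVc hΦ hΦ' hΦ''c,
    hweak _ hψ' hsupp', sub_self]

/-- A weak solution of the eigenvalue equation `-Φ'' + VΦ = λΦ` on `[a,b]`, tested against
all smooth functions compactly supported in the open interval `(a,b)`, is a strong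
solution in the interior. -/
theorem stmt_7 (a b : ℝ) (hab : a < b) (V : ℝ → ℝ) (hV : ContinuousOn V (Set.Icc a b))
    (lam : ℂ) (Φ Φ' Φ'' : ℝ → ℂ)
    (hΦ : ∀ x ∈ Set.Icc a b, HasDerivAt Φ (Φ' x) x)
    (hΦ' : ∀ x ∈ Set.Icc a b, HasDerivAt Φ' (Φ'' x) x)
    (hΦ''c : ContinuousOn Φ'' (Set.Icc a b))
    (hweak : ∀ ψ : ℝ → ℂ, ContDiff ℝ (⊤ : ℕ∞) ψ → tsupport ψ ⊆ Set.Ioo a b →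
      (∫ x in a..b, (starRingEnd ℂ) (deriv ψ x) * Φ' x)
        + (∫ x in a..b, (starRingEnd ℂ) (ψ x) * (V x : ℂ) * Φ x)
      = lam * ∫ x in a..b, (starRingEnd ℂ) (ψ x) * Φ x) :
    ∀ x ∈ Set.Ioo a b, -Φ'' x + (V x : ℂ) * Φ x = lam * Φ x :=
  stmt_7_general a b V hV lam Φ Φ' Φ'' hΦ hΦ' hΦ''c hweak
end

section
/- Let U be a unitary operator on ℂ^m. Then there exists a constant C ≥ 0, depending only on U, such that for all φ, φ̇ ∈ ℂ^m satisfying the boundary condition φ − iφ̇ = U(φ + iφ̇), one has |⟨φ, φ̇⟩| ≤ C ‖φ‖². -/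
/-!
Put `ψ = φ + iφ̇`. The boundary condition says `(U + 1) ψ = 2φ` and `ψ - φ = iφ̇`, so
`|⟪φ, φ̇⟫| = |⟪φ, ψ⟫ - ‖φ‖²|`. The component of `ψ` in `ker (U + 1)` is orthogonal to the
range of `U + 1`, hence to `φ`; the remaining component is bounded by a multiple of
`‖(U + 1) ψ‖ = 2‖φ‖` because an injective map on a finite-dimensional space is bounded below.
-/

open scoped ComplexInnerProductSpace

theorem LinearMap.exists_mem_ker_norm_sub_le {𝕜 E F : Type*} [RCLike 𝕜] [NormedAddCommGroup E]
    [InnerProductSpace 𝕜 E] [FiniteDimensional 𝕜 E] [NormedAddCommGroup F] [NormedSpace 𝕜 F]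
    (f : E →ₗ[𝕜] F) :
    ∃ c : ℝ, 0 ≤ c ∧ ∀ x, ∃ y ∈ LinearMap.ker f, ‖x - y‖ ≤ c * ‖f x‖ := by
  set K := LinearMap.ker f
  have hinj : LinearMap.ker (f.domRestrict Kᗮ) = ⊥ :=
    LinearMap.ker_eq_bot.mpr (LinearMap.injective_domRestrict_iff.mpr K.orthogonal_disjoint.symm)
  obtain ⟨c, -, hc⟩ := (f.domRestrict Kᗮ).exists_antilipschitzWith hinj
  refine ⟨c, c.coe_nonneg, fun x => ⟨K.starProjection x, K.starProjection_apply_mem x, ?_⟩⟩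
  have hfy : f (K.starProjection x) = 0 := K.starProjection_apply_mem x
  simpa [hfy] using
    ZeroHomClass.bound_of_antilipschitz _ hc ⟨_, K.sub_starProjection_mem_orthogonal x⟩

theorem LinearIsometry.inner_map_add_self_eq_zero {E : Type*} [NormedAddCommGroup E]
    [InnerProductSpace ℂ E] (U : E →ₗᵢ[ℂ] E) (x : E) {y : E} (hy : U y = -y) :
    ⟪U x + x, y⟫ = 0 := by
  have hUx : ⟪U x, y⟫ = -⟪x, y⟫ :=
    calc ⟪U x, y⟫ = ⟪U x, U (-y)⟫ := by rw [map_neg, hy, neg_neg]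
      _ = -⟪x, y⟫ := by rw [U.inner_map_map, inner_neg_right]
  rw [inner_add_left, hUx, neg_add_cancel]

theorem LinearIsometry.exists_norm_inner_le_of_boundary_condition {E : Type*}
    [NormedAddCommGroup E] [InnerProductSpace ℂ E] [FiniteDimensional ℂ E] (U : E →ₗᵢ[ℂ] E) :
    ∃ C : ℝ, 0 ≤ C ∧ ∀ φ φd : E, φ - Complex.I • φd = U (φ + Complex.I • φd) →
      ‖⟪φ, φd⟫‖ ≤ C * ‖φ‖ ^ 2 := by
  set A : E →ₗ[ℂ] E := U.toLinearMap + LinearMap.id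
  obtain ⟨c, hc0, hc⟩ := A.exists_mem_ker_norm_sub_le
  refine ⟨2 * c + 1, by positivity, fun φ φd hbc => ?_⟩
  set ψ := φ + Complex.I • φd
  have hAψ : U ψ + ψ = (2 : ℂ) • φ := by rw [← hbc]; module
  obtain ⟨ψ₀, hψ₀, hψ₁⟩ := hc ψ
  have hUψ₀ : U ψ₀ = -ψ₀ := eq_neg_of_add_eq_zero_left hψ₀
  have hφψ₀ : ⟪φ, ψ₀⟫ = 0 := by
    have h := U.inner_map_add_self_eq_zero ψ hUψ₀
    rwa [hAψ, inner_smul_left, mul_eq_zero, or_iff_right (by norm_num)] at h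
  have hψ₁ : ‖ψ - ψ₀‖ ≤ c * (2 * ‖φ‖) := by
    simpa [A, hAψ, norm_smul] using hψ₁
  calc ‖⟪φ, φd⟫‖ = ‖⟪φ, (ψ - ψ₀) - φ⟫‖ := by
        rw [inner_sub_right, inner_sub_right, hφψ₀, sub_zero, ← inner_sub_right]
        simp [ψ, inner_smul_right]
    _ ≤ ‖φ‖ * (‖ψ - ψ₀‖ + ‖φ‖) :=
        (norm_inner_le_norm _ _).trans (by gcongr; exact norm_sub_le _ _)
    _ ≤ ‖φ‖ * (c * (2 * ‖φ‖) + ‖φ‖) := by gcongr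
    _ = (2 * c + 1) * ‖φ‖ ^ 2 := by ring

/-- For a unitary operator `U` on `ℂ^m` there is a constant `C ≥ 0` such that every pair
`(φ, φ̇)` satisfying the boundary condition `φ - iφ̇ = U(φ + iφ̇)` obeys
`|⟪φ, φ̇⟫| ≤ C ‖φ‖²`. -/
theorem stmt_8 (m : ℕ)
    (U : EuclideanSpace ℂ (Fin m) ≃ₗᵢ[ℂ] EuclideanSpace ℂ (Fin m)) :
    ∃ C : ℝ, 0 ≤ C ∧ ∀ φ φd : EuclideanSpace ℂ (Fin m),
      φ - Complex.I • φd = U (φ + Complex.I • φd) →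
      ‖⟪φ, φd⟫‖ ≤ C * ‖φ‖ ^ 2 :=
  U.toLinearIsometry.exists_norm_inner_le_of_boundary_condition
end

section
/- Let U be a unitary 2n×2n complex matrix, h₁, …, h₂ₙ positive real numbers, D the diagonal matrix with D_jj = 1 + i/h_j, D̄ its entrywise conjugate, and F = D̄ − U D the boundary matrix. Set U₀ = U D D̄⁻¹ (a unitary matrix) and suppose 1 is not an eigenvalue of U₀. Then F is invertible and, with ‖·‖ the operator (spectral) norm, ‖F‖ ≤ 2‖D‖ and ‖F⁻¹‖ ≤ ‖D⁻¹‖ / min{ |1 − λ| : λ an eigenvalue of U₀ }; consequently the condition number satisfies κ(F) = ‖F‖·‖F⁻¹‖ ≤ 2 ‖D‖ ‖D⁻¹‖ / min{ |1 − λ| : λ an eigenvalue of U₀ }. -/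
/-!
Since `D̄` is invertible, `F = (1 - U₀) D̄`, and `U₀` is unitary because `D D̄⁻¹` is diagonal with
unimodular entries. Then `‖F‖ ≤ ‖D̄‖ + ‖U‖‖D‖ = 2‖D‖`. The matrix `1 - U₀` is normal, so the norm
of its inverse equals its spectral radius, which is the reciprocal of the distance from `1` to
the spectrum of `U₀`; together with `‖D̄⁻¹‖ = ‖D⁻¹‖` this bounds `‖F⁻¹‖`.
-/

/-- The operator (spectral) norm of a complex matrix, i.e. the norm of the induced
continuous linear endomorphism of Euclidean space. -/
noncomputable def opNorm {m : ℕ} (A : Matrix (Fin m) (Fin m) ℂ) : ℝ :=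
  ‖Matrix.toEuclideanCLM (𝕜 := ℂ) (n := Fin m) A‖

open scoped NNReal

theorem sInf_norm_sub_eq_infDist {E : Type*} [SeminormedAddCommGroup E] (w : E) (K : Set E) :
    sInf {r : ℝ | ∃ z ∈ K, r = ‖w - z‖} = Metric.infDist w K := by
  rw [Metric.infDist_eq_iInf, iInf]
  congr 1
  ext r
  simp [dist_eq_norm, eq_comm]

theorem sInf_norm_one_sub_spectrum_pos {A : Type*} [NormedRing A] [NormedAlgebra ℂ A]
    [CompleteSpace A] [Nontrivial A] {a : A} (h : IsUnit (1 - a)) :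
    0 < sInf {r : ℝ | ∃ z ∈ spectrum ℂ a, r = ‖1 - z‖} := by
  rw [sInf_norm_sub_eq_infDist,
    ← (spectrum.isClosed a).notMem_iff_infDist_pos (spectrum.nonempty a), spectrum.notMem_iff,
    map_one]
  exact h

section CStarAlgebra

variable {A : Type*} [CStarAlgebra A]

theorem IsStarNormal.nnnorm_le_of_forall_mem_spectrum (a : A) [IsStarNormal a] {c : ℝ≥0}
    (h : ∀ z ∈ spectrum ℂ a, ‖z‖₊ ≤ c) : ‖a‖₊ ≤ c := by
  rw [← ENNReal.coe_le_coe, ← IsStarNormal.spectralRadius_eq_nnnorm]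
  exact iSup₂_le fun z hz => ENNReal.coe_le_coe.2 (h z hz)

theorem IsStarNormal.norm_units_inv_le (a : Aˣ) [IsStarNormal (a : A)] {μ : ℝ} (hμ : 0 < μ)
    (h : ∀ z ∈ spectrum ℂ (a : A), μ ≤ ‖z‖) : ‖(↑a⁻¹ : A)‖ ≤ μ⁻¹ := by
  refine IsStarNormal.nnnorm_le_of_forall_mem_spectrum (c := ⟨μ⁻¹, inv_nonneg.2 hμ.le⟩) _
    fun z hz => ?_
  rw [← spectrum.map_inv] at hz
  have hμz : μ ≤ ‖z‖⁻¹ := norm_inv z ▸ h _ hz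
  exact (le_inv_comm₀ hμ (inv_pos.1 (hμ.trans_le hμz))).1 hμz

theorem norm_inverse_one_sub_unitary_le {u : A} (hu : u ∈ unitary A) {μ : ℝ} (hμ : 0 < μ)
    (h : ∀ z ∈ spectrum ℂ u, μ ≤ ‖1 - z‖) : ‖Ring.inverse (1 - u)‖ ≤ μ⁻¹ := by
  have h1 : (1 : ℂ) ∉ spectrum ℂ u := fun h1 => by simpa using hμ.trans_le (h 1 h1)
  obtain ⟨v, hv⟩ : IsUnit (1 - u) := by simpa [spectrum.notMem_iff] using h1
  have : IsStarNormal u := Unitary.coe_isStarNormal ⟨u, hu⟩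
  have : IsStarNormal (v : A) := hv ▸ IsStarNormal.one_sub
  rw [← hv, Ring.inverse_unit]
  refine IsStarNormal.norm_units_inv_le v hμ fun z hz => ?_
  rw [hv, ← map_one (algebraMap ℂ A), ← spectrum.singleton_sub_eq] at hz
  obtain ⟨_, rfl, w, hw, rfl⟩ := hz
  exact h w hw

theorem norm_inverse_one_sub_unitary_le_inv_sInf [Nontrivial A] {u : A} (hu : u ∈ unitary A)
    (h1 : IsUnit (1 - u)) :
    ‖Ring.inverse (1 - u)‖ ≤ (sInf {r : ℝ | ∃ z ∈ spectrum ℂ u, r = ‖1 - z‖})⁻¹ :=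
  norm_inverse_one_sub_unitary_le hu (sInf_norm_one_sub_spectrum_pos h1) fun z hz => by
    rw [sInf_norm_sub_eq_infDist, ← dist_eq_norm]
    exact Metric.infDist_le_dist_of_mem hz

theorem norm_star_sub_unitary_mul_le [Nontrivial A] {u : A} (hu : u ∈ unitary A) (d : A) :
    ‖star d - u * d‖ ≤ 2 * ‖d‖ :=
  calc ‖star d - u * d‖ ≤ ‖star d‖ + ‖u‖ * ‖d‖ :=
        (norm_sub_le _ _).trans (by gcongr; exact norm_mul_le _ _)
    _ = 2 * ‖d‖ := by rw [norm_star, CStarRing.norm_of_mem_unitary hu]; ring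

end CStarAlgebra

namespace Matrix

theorem diagonal_map_starRingEnd {ι R : Type*} [DecidableEq ι] [CommSemiring R] [StarRing R]
    (d : ι → R) : (diagonal d).map (starRingEnd R) = star (diagonal d) := by
  rw [diagonal_map (map_zero _), star_eq_conjTranspose, diagonal_conjTranspose]
  rfl

variable {ι : Type*} [Fintype ι] [DecidableEq ι]

theorem diagonal_mul_inv_star_mem_unitaryGroup {K : Type*} [Field K] [StarRing K]
    {d : ι → K} (hd : ∀ i, d i ≠ 0) :
    diagonal d * (star (diagonal d))⁻¹ ∈ unitaryGroup ι K := by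
  have hd' : ∀ i, star (d i) ≠ 0 := fun i => star_ne_zero.2 (hd i)
  have hinv : (star (diagonal d))⁻¹ = diagonal fun i => (star (d i))⁻¹ := by
    refine inv_eq_left_inv ?_
    rw [star_eq_conjTranspose, diagonal_conjTranspose, diagonal_mul_diagonal, ← diagonal_one]
    exact congrArg diagonal (funext fun i => inv_mul_cancel₀ (hd' i))
  rw [hinv, diagonal_mul_diagonal, mem_unitaryGroup_iff, star_eq_conjTranspose,
    diagonal_conjTranspose, diagonal_mul_diagonal, ← diagonal_one]
  refine congrArg diagonal (funext fun i => ?_)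
  simp only [Pi.star_apply, star_mul', star_inv₀, star_star]
  field_simp [hd i, hd' i]

theorem sub_eq_one_sub_mul_inv_mul {R : Type*} [CommRing R] {e : Matrix ι ι R}
    (he : IsUnit e) (a : Matrix ι ι R) : e - a = (1 - a * e⁻¹) * e := by
  rw [sub_mul, one_mul, mul_assoc, nonsing_inv_mul _ ((isUnit_iff_isUnit_det e).1 he), mul_one]

theorem isUnit_one_sub_of_mulVec_eq_self {K : Type*} [Field K] {A : Matrix ι ι K}
    (h : ∀ x, A *ᵥ x = x → x = 0) : IsUnit (1 - A) := by
  rw [isUnit_iff_isUnit_det, isUnit_iff_ne_zero]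
  intro hdet
  obtain ⟨v, hv0, hv⟩ := exists_mulVec_eq_zero_iff.2 hdet
  rw [sub_mulVec, one_mulVec, sub_eq_zero, eq_comm] at hv
  exact hv0 (h v hv)

open scoped Norms.L2Operator

theorem l2_opNorm_inv_star (A : Matrix ι ι ℂ) : ‖(star A)⁻¹‖ = ‖A⁻¹‖ := by
  rw [star_eq_conjTranspose, ← conjTranspose_nonsing_inv, ← star_eq_conjTranspose, norm_star]

end Matrix

theorem Complex.one_add_I_div_ofReal_ne_zero (x : ℝ) : 1 + I / x ≠ 0 := fun h => by
  simpa using congrArg Complex.re h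

open scoped Matrix.Norms.L2Operator

theorem opNorm_eq_norm {m : ℕ} (A : Matrix (Fin m) (Fin m) ℂ) : opNorm A = ‖A‖ := rfl

theorem stmt_12_general (n : ℕ) (hn : 0 < n) (U : Matrix (Fin (2 * n)) (Fin (2 * n)) ℂ)
    (hU : U ∈ Matrix.unitaryGroup (Fin (2 * n)) ℂ)
    (h : Fin (2 * n) → ℝ) :
    let D : Matrix (Fin (2 * n)) (Fin (2 * n)) ℂ :=
      Matrix.diagonal fun j => 1 + Complex.I / (h j : ℂ)
    let Dbar := D.map (starRingEnd ℂ)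
    let F := Dbar - U * D
    let U₀ := U * D * Dbar⁻¹
    let μ := sInf {r : ℝ | ∃ z ∈ spectrum ℂ U₀, r = ‖1 - z‖}
    (∀ x : Fin (2 * n) → ℂ, U₀.mulVec x = x → x = 0) →
      IsUnit F ∧ opNorm F ≤ 2 * opNorm D ∧ opNorm F⁻¹ ≤ opNorm D⁻¹ / μ ∧
        opNorm F * opNorm F⁻¹ ≤ 2 * opNorm D * opNorm D⁻¹ / μ := by
  intro D Dbar F U₀ μ hker
  have : Nonempty (Fin (2 * n)) := ⟨⟨0, by omega⟩⟩
  have hd : ∀ j, 1 + Complex.I / (h j : ℂ) ≠ 0 := fun j => Complex.one_add_I_div_ofReal_ne_zero _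
  have hDbar : Dbar = star D := Matrix.diagonal_map_starRingEnd _
  have hDbar_unit : IsUnit Dbar := by
    rw [hDbar, isUnit_star, Matrix.isUnit_diagonal, Pi.isUnit_iff]
    exact fun j => (hd j).isUnit
  have hU₀ : U₀ ∈ Matrix.unitaryGroup (Fin (2 * n)) ℂ := by
    rw [show U₀ = U * (D * (star D)⁻¹) by rw [← hDbar, ← mul_assoc]]
    exact mul_mem hU (Matrix.diagonal_mul_inv_star_mem_unitaryGroup hd)
  have hF : F = (1 - U₀) * Dbar := Matrix.sub_eq_one_sub_mul_inv_mul hDbar_unit _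
  have h1 : IsUnit (1 - U₀) := Matrix.isUnit_one_sub_of_mulVec_eq_self hker
  have hμ : 0 < μ := sInf_norm_one_sub_spectrum_pos h1
  have hFnorm : ‖F‖ ≤ 2 * ‖D‖ := by
    simpa only [F, hDbar] using norm_star_sub_unitary_mul_le hU D
  have hFinvnorm : ‖F⁻¹‖ ≤ ‖D⁻¹‖ / μ :=
    calc ‖F⁻¹‖ = ‖Dbar⁻¹ * (1 - U₀)⁻¹‖ := by rw [hF, Matrix.mul_inv_rev]
      _ ≤ ‖Dbar⁻¹‖ * ‖(1 - U₀)⁻¹‖ := norm_mul_le _ _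
      _ ≤ ‖D⁻¹‖ * μ⁻¹ := by
        rw [hDbar, Matrix.l2_opNorm_inv_star, Matrix.nonsing_inv_eq_ringInverse (1 - U₀)]
        gcongr
        exact norm_inverse_one_sub_unitary_le_inv_sInf hU₀ h1
      _ = ‖D⁻¹‖ / μ := (div_eq_mul_inv _ _).symm
  simp only [opNorm_eq_norm]
  refine ⟨hF ▸ h1.mul hDbar_unit, hFnorm, hFinvnorm, ?_⟩
  calc ‖F‖ * ‖F⁻¹‖ ≤ 2 * ‖D‖ * (‖D⁻¹‖ / μ) := by gcongr
    _ = 2 * ‖D‖ * ‖D⁻¹‖ / μ := (mul_div_assoc _ _ _).symm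

/-- Conditioning of the boundary matrix `F = D̄ - U D`: if `1` is not an eigenvalue of the
unitary matrix `U₀ = U D D̄⁻¹`, then `F` is invertible, `‖F‖ ≤ 2‖D‖`,
`‖F⁻¹‖ ≤ ‖D⁻¹‖ / min{|1-λ| : λ ∈ spec U₀}`, and hence
`κ(F) = ‖F‖‖F⁻¹‖ ≤ 2‖D‖‖D⁻¹‖ / min{|1-λ| : λ ∈ spec U₀}`. -/
theorem stmt_12 (n : ℕ) (hn : 0 < n) (U : Matrix (Fin (2 * n)) (Fin (2 * n)) ℂ)
    (hU : U ∈ Matrix.unitaryGroup (Fin (2 * n)) ℂ)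
    (h : Fin (2 * n) → ℝ) (hpos : ∀ j, 0 < h j) :
    let D : Matrix (Fin (2 * n)) (Fin (2 * n)) ℂ :=
      Matrix.diagonal fun j => 1 + Complex.I / (h j : ℂ)
    let Dbar := D.map (starRingEnd ℂ)
    let F := Dbar - U * D
    let U₀ := U * D * Dbar⁻¹
    let μ := sInf {r : ℝ | ∃ z ∈ spectrum ℂ U₀, r = ‖1 - z‖}
    (∀ x : Fin (2 * n) → ℂ, U₀.mulVec x = x → x = 0) →
      IsUnit F ∧ opNorm F ≤ 2 * opNorm D ∧ opNorm F⁻¹ ≤ opNorm D⁻¹ / μ ∧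
        opNorm F * opNorm F⁻¹ ≤ 2 * opNorm D * opNorm D⁻¹ / μ :=
  stmt_12_general n hn U hU h
end

section
/- Let U be a unitary 2n×2n complex matrix and h₁, …, h₂ₙ positive real numbers. Let V be a 2n×2n complex matrix whose columns v⁽ⁱ⁾ = (V_{li})_{l=1,…,2n} satisfy, together with the derivative vectors β̇⁽ⁱ⁾ defined by β̇⁽ⁱ⁾_l = −(1/h_l)(δ_{li} − V_{li}), the boundary condition v⁽ⁱ⁾ − i β̇⁽ⁱ⁾ = U( v⁽ⁱ⁾ + i β̇⁽ⁱ⁾ ) for every i = 1, …, 2n. Then for all indices i, j one has (1/h_j) conj(V_{ji}) = (1/h_i) V_{ij}. -/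
open Matrix


/-- Hermiticity of the boundary-value matrix: if the columns `v⁽ⁱ⁾ = (V_{li})_l` of `V`,
together with the derivative vectors `β̇⁽ⁱ⁾_l = -(1/h_l)(δ_{li} - V_{li})`, satisfy the
self-adjoint boundary condition `v⁽ⁱ⁾ - iβ̇⁽ⁱ⁾ = U(v⁽ⁱ⁾ + iβ̇⁽ⁱ⁾)` for all `i`, then
`(1/h_j) conj(V_{ji}) = (1/h_i) V_{ij}` for all `i, j`. -/
theorem stmt_15 (n : ℕ) (U : Matrix (Fin (2 * n)) (Fin (2 * n)) ℂ)
    (hU : U ∈ Matrix.unitaryGroup (Fin (2 * n)) ℂ)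
    (h : Fin (2 * n) → ℝ) (hpos : ∀ j, 0 < h j)
    (V : Matrix (Fin (2 * n)) (Fin (2 * n)) ℂ)
    (hbc : ∀ i, (fun l => V l i - Complex.I *
        (-(1 / (h l : ℂ)) * ((if l = i then 1 else 0) - V l i)))
      = U.mulVec (fun l => V l i + Complex.I *
        (-(1 / (h l : ℂ)) * ((if l = i then 1 else 0) - V l i)))) :
    ∀ i j, (1 / (h j : ℂ)) * (starRingEnd ℂ) (V j i) = (1 / (h i : ℂ)) * V i j := by
  classical
  intro i j
  have hsUU : Uᴴ * U = 1 := hU.1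
  have key : ∀ x y : Fin (2 * n) → ℂ,
      star (U.mulVec x) ⬝ᵥ U.mulVec y = star x ⬝ᵥ y := by
    intro x y
    rw [Matrix.star_mulVec, Matrix.dotProduct_mulVec, Matrix.vecMul_vecMul, hsUU,
      Matrix.vecMul_one]
  have main := key
    (fun l => V l i + Complex.I * (-(1 / (h l : ℂ)) * ((if l = i then 1 else 0) - V l i)))
    (fun l => V l j + Complex.I * (-(1 / (h l : ℂ)) * ((if l = j then 1 else 0) - V l j)))
  rw [← hbc i, ← hbc j] at main
  simp only [dotProduct, Pi.star_apply, Complex.star_def] at main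
  have diff : ∑ l, ((starRingEnd ℂ)
        (V l i + Complex.I * (-(1 / (h l : ℂ)) * ((if l = i then 1 else 0) - V l i))) *
        (V l j + Complex.I * (-(1 / (h l : ℂ)) * ((if l = j then 1 else 0) - V l j)))
      - (starRingEnd ℂ)
        (V l i - Complex.I * (-(1 / (h l : ℂ)) * ((if l = i then 1 else 0) - V l i))) *
        (V l j - Complex.I * (-(1 / (h l : ℂ)) * ((if l = j then 1 else 0) - V l j)))) = 0 := by
    rw [Finset.sum_sub_distrib, main, sub_self]
  have hterm : ∀ l, ((starRingEnd ℂ)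
        (V l i + Complex.I * (-(1 / (h l : ℂ)) * ((if l = i then 1 else 0) - V l i))) *
        (V l j + Complex.I * (-(1 / (h l : ℂ)) * ((if l = j then 1 else 0) - V l j)))
      - (starRingEnd ℂ)
        (V l i - Complex.I * (-(1 / (h l : ℂ)) * ((if l = i then 1 else 0) - V l i))) *
        (V l j - Complex.I * (-(1 / (h l : ℂ)) * ((if l = j then 1 else 0) - V l j))))
      = (2 * Complex.I) *
        ((if l = i then (1 / (h l : ℂ)) * V l j else 0)
          - (if l = j then (1 / (h l : ℂ)) * (starRingEnd ℂ) (V l i) else 0)) := by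
    intro l
    by_cases hi : l = i <;> by_cases hj : l = j <;>
      simp_all [map_add, map_sub, _root_.map_mul, map_neg, map_div₀, _root_.map_one,
        apply_ite (starRingEnd ℂ), Complex.conj_I, Complex.conj_ofReal] <;> ring
  rw [Finset.sum_congr rfl (fun l _ => hterm l), ← Finset.mul_sum,
    Finset.sum_sub_distrib, Finset.sum_ite_eq' Finset.univ i
      (fun l => (1 / (h l : ℂ)) * V l j),
    Finset.sum_ite_eq' Finset.univ j
      (fun l => (1 / (h l : ℂ)) * (starRingEnd ℂ) (V l i))] at diff
  simp only [Finset.mem_univ, if_true] at diff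
  have h2I : (2 * Complex.I) ≠ 0 := by
    simp [Complex.I_ne_zero]
  have := (mul_eq_zero.mp diff).resolve_left h2I
  linear_combination -this
end
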